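/- Let q ≥ 3 be an integer and let x and y be distinct non-adjacent vertices of the Farey graph 𝓕_q. Then there is exactly one face P of 𝓕_q for which there exist g ∈ G_q and an integer i such that P = g(V_0), x = g(ρ^i(∞)), and y lies in the connected component of ℝ∞ \ {g(ρ^{i−1}(∞)), g(ρ^{i+1}(∞))} that does not contain x. -/

import Mathlib

open OnePoint

noncomputable def lamq (q : ℕ) : ℝ := 2 * Real.cos (Real.pi / q)

abbrev RInf : Type := OnePoint ℝ

noncomputable def sigmaFun : RInf → RInf := fun z =>
  match z with
  | Option.none => ((0 : ℝ) : RInf)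
  | Option.some x => if x = 0 then (∞ : RInf) else ((-x⁻¹ : ℝ) : RInf)

lemma sigmaFun_invol (z : RInf) : sigmaFun (sigmaFun z) = z := by
  cases z with
  | none => simp [sigmaFun, OnePoint.infty] <;> rfl
  | some x =>
    by_cases h : x = 0
    · simp only [sigmaFun, h, if_true, if_pos]
      rfl
    · simp only [sigmaFun, h, if_false]
      have h1 : (-x⁻¹ : ℝ) ≠ 0 := by simpa using h
      simp only [h1, if_false]
      have h2 : (-(-x⁻¹)⁻¹ : ℝ) = x := by
        rw [inv_neg, inv_inv, neg_neg]
      rw [h2]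
      rfl

noncomputable def sigmaP : Equiv.Perm RInf :=
  ⟨sigmaFun, sigmaFun, sigmaFun_invol, sigmaFun_invol⟩

noncomputable def tauP (q : ℕ) : Equiv.Perm RInf where
  toFun z := match z with
    | Option.none => (∞ : RInf)
    | Option.some x => Option.some (x + lamq q)
  invFun z := match z with
    | Option.none => (∞ : RInf)
    | Option.some x => Option.some (x - lamq q)
  left_inv z := by cases z <;> simp [OnePoint.infty] <;> rfl
  right_inv z := by cases z <;> simp [OnePoint.infty] <;> rfl

noncomputable def Gq (q : ℕ) : Subgroup (Equiv.Perm RInf) :=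
  Subgroup.closure {sigmaP, tauP q}

def FareyVertex (q : ℕ) (v : RInf) : Prop := ∃ g ∈ Gq q, g ∞ = v

def FareyAdj (q : ℕ) (u v : RInf) : Prop :=
  u ≠ v ∧ ∃ g ∈ Gq q,
    ((g ((0:ℝ) : RInf) = u ∧ g ∞ = v) ∨ (g ((0:ℝ) : RInf) = v ∧ g ∞ = u))

noncomputable def rhoP (q : ℕ) : Equiv.Perm RInf := tauP q * sigmaP

def V0 (q : ℕ) : Set RInf := {v | ∃ i : ℕ, i < q ∧ (rhoP q ^ i) ∞ = v}

def IsFace (q : ℕ) (P : Set RInf) : Prop := ∃ g ∈ Gq q, P = ⇑g '' V0 q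

/-- `y` lies in the connected component of `ℝ∞ \ {u, v}` that does not contain `x`. -/
def SepSide (u v x y : RInf) : Prop :=
  y ∈ ({u, v}ᶜ : Set RInf) ∧ x ∉ connectedComponentIn ({u, v}ᶜ : Set RInf) y

noncomputable def Tq (q : ℕ) (b : ℤ) : RInf → RInf := fun z =>
  match z with
  | Option.none => ((b * lamq q : ℝ) : RInf)
  | Option.some x => if x = 0 then (∞ : RInf) else ((b * lamq q - x⁻¹ : ℝ) : RInf)

noncomputable def RosenValue (q : ℕ) (bs : List ℤ) : RInf := bs.foldr (Tq q) ∞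

def IsGeodesicRosen (q : ℕ) (bs : List ℤ) : Prop :=
  bs ≠ [] ∧ RosenValue q bs ≠ ∞ ∧
  ∀ cs : List ℤ, cs ≠ [] → RosenValue q cs = RosenValue q bs → bs.length ≤ cs.length

def IsPathFrom (q : ℕ) (p : List RInf) (x y : RInf) : Prop :=
  p.Chain' (FareyAdj q) ∧ p.head? = Option.some x ∧ p.getLast? = Option.some y

def IsGeodesicPath (q : ℕ) (p : List RInf) (x y : RInf) : Prop :=
  IsPathFrom q p x y ∧ ∀ p' : List RInf, IsPathFrom q p' x y → p.length ≤ p'.length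

/-- `{u, v}` is a pair of `y`-parents of `x`. -/
def IsParentPair (q : ℕ) (y x u v : RInf) : Prop :=
  ∃ g ∈ Gq q, ∃ i : ℤ,
    g ((rhoP q ^ i) ∞) = x ∧
    ({u, v} : Set RInf) = {g ((rhoP q ^ (i-1)) ∞), g ((rhoP q ^ (i+1)) ∞)} ∧
    SepSide u v x y

/-- `P 0, …, P (n-1)` is the q-chain from `x` to `y`. -/
def IsQChain (q : ℕ) (x y : RInf) (n : ℕ) (P : ℕ → Set RInf) : Prop :=
  1 ≤ n ∧ (∀ j < n, IsFace q (P j)) ∧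
  (∃ g ∈ Gq q, ∃ i : ℤ,
      g ((rhoP q ^ i) ∞) = x ∧ P 0 = ⇑g '' V0 q ∧
      SepSide (g ((rhoP q ^ (i-1)) ∞)) (g ((rhoP q ^ (i+1)) ∞)) x y) ∧
  y ∈ P (n-1) ∧ (∀ j, j < n - 1 → y ∉ P j) ∧
  (∀ j, j + 1 < n → ∃ a b : RInf, FareyAdj q a b ∧ a ∈ P j ∧ b ∈ P j ∧
      (y ∈ ({a, b}ᶜ : Set RInf) ∧
        ∀ w ∈ P j, w ∉ connectedComponentIn ({a, b}ᶜ : Set RInf) y) ∧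
      P (j+1) ≠ P j ∧ a ∈ P (j+1) ∧ b ∈ P (j+1))

/-- Fibonacci numbers with `F 0 = 1`, `F 1 = 2`. -/
def fibF : ℕ → ℕ
  | 0 => 1
  | 1 => 2
  | (n+2) => fibF (n+1) + fibF n

/-!
Every vertex is `g ∞` for some `g ∈ G_q`, and `G_q` acts on `ℝ∞` by homeomorphisms preserving
adjacency and faces, so we may take `x = ∞`. The key fact is that the stabiliser of `∞` in `G_q`
is generated by `τ_q`. Since `ρ` acts through a matrix whose powers have entries
`sin (nπ/q) / sin (π/q)`, we get `ρ^q = 1`, so every element of `G_q` is a word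
`ρ^c σρ^aₖ ⋯ σρ^a₁ σ^e` with `0 < aᵢ < q`. As `σ` sends positive reals to negative ones and
each `ρ^a` sends negative reals to positive ones, such a word can only fix `∞` after cancelling
a trailing `τ = ρσ` or `τ⁻¹ = σρ^(q-1)`; by induction it is a power of `τ`.

Hence the faces at `∞` are the translates `τ^m V₀`, on which the neighbours of `∞` are `mλ` and
`(m+1)λ`, and the separation condition says that `y` lies in the interval `(mλ, (m+1)λ)`. Since
`y` is not adjacent to `∞`, it is not a multiple of `λ`, so exactly one `m` works.
-/

open Real Set Filter Topology

noncomputable def sinRatio (q n : ℕ) : ℝ := sin (n * (π / q)) / sin (π / q)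

lemma sin_pi_div_pos {q : ℕ} (hq : 2 ≤ q) : 0 < sin (π / q) := by
  have hq' : (2 : ℝ) ≤ q := by exact_mod_cast hq
  apply sin_pos_of_pos_of_lt_pi (by positivity)
  rw [div_lt_iff₀ (by positivity)]
  nlinarith [pi_pos]

lemma sinRatio_zero (q : ℕ) : sinRatio q 0 = 0 := by simp [sinRatio]

lemma sinRatio_one {q : ℕ} (hq : 2 ≤ q) : sinRatio q 1 = 1 := by
  simp [sinRatio, (sin_pi_div_pos hq).ne']

lemma sinRatio_add_two (q n : ℕ) :
    sinRatio q (n + 2) = lamq q * sinRatio q (n + 1) - sinRatio q n := by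
  have h : sin ((n + 2) * (π / q)) = 2 * cos (π / q) * sin ((n + 1) * (π / q))
      - sin (n * (π / q)) := by
    have e₁ : ((n : ℝ) + 2) * (π / q) = (n + 1) * (π / q) + π / q := by ring
    have e₂ : (n : ℝ) * (π / q) = (n + 1) * (π / q) - π / q := by ring
    rw [e₁, e₂, sin_add, sin_sub]
    ring
  simp only [sinRatio, lamq, Nat.cast_add, Nat.cast_ofNat, Nat.cast_one, h]
  ring

lemma sinRatio_pos {q n : ℕ} (hn : 0 < n) (hnq : n < q) : 0 < sinRatio q n := by
  have hq : (0 : ℝ) < q := by exact_mod_cast hn.trans hnq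
  refine div_pos (sin_pos_of_pos_of_lt_pi (by positivity) ?_) (sin_pi_div_pos (by omega))
  rw [mul_div_assoc', div_lt_iff₀ hq, mul_comm π]
  exact mul_lt_mul_of_pos_right (by exact_mod_cast hnq) pi_pos

lemma sinRatio_self {q : ℕ} (hq : 0 < q) : sinRatio q q = 0 := by
  rw [sinRatio, mul_div_cancel₀ _ (by positivity : (q : ℝ) ≠ 0), sin_pi, zero_div]

lemma sinRatio_pred_self {q : ℕ} (hq : 2 ≤ q) : sinRatio q (q - 1) = 1 := by
  have h : ((q - 1 : ℕ) : ℝ) * (π / q) = π - π / q := by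
    rw [Nat.cast_sub (by omega), Nat.cast_one]
    field_simp
  rw [sinRatio, h, sin_pi_sub, div_self (sin_pi_div_pos hq).ne']

lemma sinRatio_succ_self {q : ℕ} (hq : 2 ≤ q) : sinRatio q (q + 1) = -1 := by
  obtain ⟨p, rfl⟩ : ∃ p, q = p + 1 := ⟨q - 1, by omega⟩
  rw [sinRatio_add_two, sinRatio_self (by omega), ← sinRatio_pred_self hq]
  simp

lemma lamq_pos {q : ℕ} (hq : 3 ≤ q) : 0 < lamq q := by
  have hq' : (3 : ℝ) ≤ q := by exact_mod_cast hq
  have hpos : 0 < π / q := div_pos pi_pos (by linarith)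
  refine mul_pos two_pos (cos_pos_of_mem_Ioo ⟨by linarith [pi_pos], ?_⟩)
  rw [div_lt_iff₀ (by linarith)]
  nlinarith [pi_pos]

@[simp] lemma sigmaP_infty : sigmaP ∞ = ((0 : ℝ) : RInf) := rfl

@[simp] lemma sigmaP_coe (x : ℝ) :
    sigmaP x = if x = 0 then ∞ else ((-x⁻¹ : ℝ) : RInf) := rfl

@[simp] lemma tauP_infty (q : ℕ) : tauP q ∞ = ∞ := rfl

@[simp] lemma tauP_coe (q : ℕ) (x : ℝ) : tauP q x = ((x + lamq q : ℝ) : RInf) := rfl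

@[simp] lemma tauP_inv_coe (q : ℕ) (x : ℝ) : (tauP q)⁻¹ x = ((x - lamq q : ℝ) : RInf) := rfl

lemma rhoP_infty (q : ℕ) : rhoP q ∞ = ((lamq q : ℝ) : RInf) := by simp [rhoP]

lemma rhoP_zero (q : ℕ) : rhoP q ((0 : ℝ) : RInf) = ∞ := by simp [rhoP]

lemma sigmaP_mem_Gq (q : ℕ) : sigmaP ∈ Gq q := Subgroup.subset_closure (by simp)

lemma tauP_mem_Gq (q : ℕ) : tauP q ∈ Gq q := Subgroup.subset_closure (by simp)

lemma rhoP_mem_Gq (q : ℕ) : rhoP q ∈ Gq q := mul_mem (tauP_mem_Gq q) (sigmaP_mem_Gq q)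

lemma sigmaP_mul_self : sigmaP * sigmaP = 1 := Equiv.ext sigmaFun_invol

lemma tauP_eq (q : ℕ) : tauP q = rhoP q * sigmaP := by
  rw [rhoP, mul_assoc, sigmaP_mul_self, mul_one]

lemma tauP_zpow_coe (q : ℕ) (m : ℤ) (x : ℝ) :
    (tauP q ^ m) x = ((x + m * lamq q : ℝ) : RInf) := by
  induction m using Int.induction_on generalizing x with
  | zero => simp
  | succ m ih => rw [zpow_add_one, Equiv.Perm.mul_apply, tauP_coe, ih]; push_cast; ring_nf
  | pred m ih => rw [zpow_sub_one, Equiv.Perm.mul_apply, tauP_inv_coe, ih]; push_cast; ring_nf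

lemma tauP_zpow_infty (q : ℕ) (m : ℤ) : (tauP q ^ m) ∞ = ∞ :=
  Equiv.Perm.zpow_apply_eq_self_of_apply_eq_self (tauP_infty q) m

noncomputable def rhoMat (q : ℕ) : GL (Fin 2) ℝ :=
  Matrix.GeneralLinearGroup.mkOfDetNeZero !![lamq q, -1; 1, 0] (by simp [Matrix.det_fin_two])

lemma rhoP_apply (q : ℕ) (z : RInf) : rhoP q z = rhoMat q • z := by
  induction z using OnePoint.rec with
  | infty =>
    simp [rhoMat, smul_infty_eq_ite, rhoP]
  | coe x =>
    by_cases hx : x = 0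
    · simp [rhoMat, smul_some_eq_ite, rhoP, hx]
    · simp [rhoMat, smul_some_eq_ite, rhoP, hx]
      field_simp
      ring

lemma rhoP_pow_apply (q n : ℕ) (z : RInf) : (rhoP q ^ n) z = (rhoMat q ^ n) • z := by
  induction n generalizing z with
  | zero => simp
  | succ n ih => rw [pow_succ, Equiv.Perm.mul_apply, ih, rhoP_apply, pow_succ, mul_smul]

lemma coe_rhoMat_pow_succ {q : ℕ} (hq : 2 ≤ q) (n : ℕ) :
    ((rhoMat q ^ (n + 1) : GL (Fin 2) ℝ) : Matrix (Fin 2) (Fin 2) ℝ) =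
      !![sinRatio q (n + 2), -sinRatio q (n + 1); sinRatio q (n + 1), -sinRatio q n] := by
  induction n with
  | zero =>
    have h2 := sinRatio_add_two q 0
    simp only [zero_add, sinRatio_one hq, sinRatio_zero] at h2
    simp [rhoMat, h2, sinRatio_one hq, sinRatio_zero]
  | succ n ih =>
    rw [pow_succ', Units.val_mul, ih]
    ext i j
    fin_cases i <;> fin_cases j <;>
      simp [rhoMat, sinRatio_add_two q (n + 1), sinRatio_add_two q n] <;> ring

lemma rhoP_pow_succ_infty {q : ℕ} (hq : 2 ≤ q) (n : ℕ) :
    (rhoP q ^ (n + 1)) ∞ = if sinRatio q (n + 1) = 0 then ∞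
      else ((sinRatio q (n + 2) / sinRatio q (n + 1) : ℝ) : RInf) := by
  rw [rhoP_pow_apply, smul_infty_eq_ite, coe_rhoMat_pow_succ hq]
  simp

lemma rhoP_pow_succ_coe {q : ℕ} (hq : 2 ≤ q) (n : ℕ) (x : ℝ) :
    (rhoP q ^ (n + 1)) x = if sinRatio q (n + 1) * x - sinRatio q n = 0 then ∞
      else (((sinRatio q (n + 2) * x - sinRatio q (n + 1)) /
        (sinRatio q (n + 1) * x - sinRatio q n) : ℝ) : RInf) := by
  rw [rhoP_pow_apply, smul_some_eq_ite, coe_rhoMat_pow_succ hq]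
  simp [sub_eq_add_neg]

lemma rhoP_pow_self {q : ℕ} (hq : 2 ≤ q) : rhoP q ^ q = 1 := by
  obtain ⟨p, rfl⟩ : ∃ p, q = p + 1 := ⟨q - 1, by omega⟩
  have h₀ : sinRatio (p + 1) (p + 1) = 0 := sinRatio_self (by omega)
  have h₁ : sinRatio (p + 1) p = 1 := sinRatio_pred_self hq
  have h₂ : sinRatio (p + 1) (p + 2) = -1 := sinRatio_succ_self hq
  ext z
  induction z using OnePoint.rec with
  | infty => simp [rhoP_pow_succ_infty hq, h₀]
  | coe x => simp [rhoP_pow_succ_coe hq, h₀, h₁, h₂]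

lemma tauP_inv_eq {q : ℕ} (hq : 2 ≤ q) : (tauP q)⁻¹ = sigmaP * rhoP q ^ (q - 1) := by
  rw [inv_eq_iff_mul_eq_one, tauP_eq, mul_assoc, ← mul_assoc sigmaP, sigmaP_mul_self, one_mul,
    ← pow_succ', Nat.sub_add_cancel (by omega), rhoP_pow_self hq]

def posRay : Set RInf := (↑) '' Ioi (0 : ℝ)

def negRay : Set RInf := (↑) '' Iio (0 : ℝ)

lemma infty_notMem_posRay : ∞ ∉ posRay := infty_notMem_image_coe

lemma infty_notMem_negRay : ∞ ∉ negRay := infty_notMem_image_coe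

lemma sigmaP_mapsTo_posRay : MapsTo sigmaP posRay negRay := by
  rintro _ ⟨x, hx : 0 < x, rfl⟩
  exact ⟨-x⁻¹, by simpa using hx, by simp [hx.ne']⟩

lemma rhoP_pow_mapsTo_negRay {q a : ℕ} (hq : 2 ≤ q) (ha : 0 < a) (haq : a < q) :
    MapsTo (rhoP q ^ a) negRay posRay := by
  obtain ⟨n, rfl⟩ : ∃ n, a = n + 1 := ⟨a - 1, by omega⟩
  rintro _ ⟨x, hx : x < 0, rfl⟩
  have h₁ := sinRatio_pos (q := q) (n := n + 1) (by omega) haq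
  have h₀ : 0 ≤ sinRatio q n := by
    rcases n.eq_zero_or_pos with rfl | hn
    · rw [sinRatio_zero]
    · exact (sinRatio_pos hn (by omega)).le
  have h₂ : 0 ≤ sinRatio q (n + 2) := by
    rcases (show n + 2 ≤ q by omega).eq_or_lt with h | h
    · rw [h, sinRatio_self (by omega)]
    · exact (sinRatio_pos (by omega) h).le
  have hden : sinRatio q (n + 1) * x - sinRatio q n < 0 := by nlinarith
  have hnum : sinRatio q (n + 2) * x - sinRatio q (n + 1) < 0 := by nlinarith
  rw [rhoP_pow_succ_coe hq, if_neg hden.ne]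
  exact mem_image_of_mem _ (div_pos_of_neg_of_neg hnum hden)

lemma rhoP_pow_infty_mem_posRay {q a : ℕ} (hq : 2 ≤ q) (ha : 0 < a) (haq : a + 1 < q) :
    (rhoP q ^ a) ∞ ∈ posRay := by
  obtain ⟨n, rfl⟩ : ∃ n, a = n + 1 := ⟨a - 1, by omega⟩
  have h₁ := sinRatio_pos (q := q) (n := n + 1) (by omega) (by omega)
  rw [rhoP_pow_succ_infty hq, if_neg h₁.ne']
  exact mem_image_of_mem _ (div_pos (sinRatio_pos (by omega) haq) h₁)

lemma rhoP_pow_pred_infty {q : ℕ} (hq : 2 ≤ q) : (rhoP q ^ (q - 1)) ∞ = ((0 : ℝ) : RInf) := by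
  obtain ⟨n, hn⟩ : ∃ n, q - 1 = n + 1 := ⟨q - 2, by omega⟩
  rw [hn, rhoP_pow_succ_infty hq, if_neg (sinRatio_pos (by omega) (by omega)).ne',
    show n + 2 = q by omega, sinRatio_self (by omega), zero_div]

lemma rhoP_pow_infty_ne_infty {q a : ℕ} (hq : 2 ≤ q) (ha : 0 < a) (haq : a < q) :
    (rhoP q ^ a) ∞ ≠ ∞ := by
  obtain ⟨n, rfl⟩ : ∃ n, a = n + 1 := ⟨a - 1, by omega⟩
  rw [rhoP_pow_succ_infty hq, if_neg (sinRatio_pos (by omega) haq).ne']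
  exact coe_ne_infty _

lemma rhoP_pow_zero_mem_posRay {q a : ℕ} (hq : 2 ≤ q) (ha : 2 ≤ a) (haq : a < q) :
    (rhoP q ^ a) ((0 : ℝ) : RInf) ∈ posRay := by
  obtain ⟨n, rfl⟩ : ∃ n, a = n + 1 := ⟨a - 1, by omega⟩
  have h₀ := sinRatio_pos (q := q) (n := n) (by omega) (by omega)
  rw [rhoP_pow_succ_coe hq, mul_zero, zero_sub, if_neg (neg_ne_zero.2 h₀.ne')]
  refine mem_image_of_mem _ ?_
  rw [mul_zero, zero_sub, neg_div_neg_eq]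
  exact div_pos (sinRatio_pos (by omega) haq) h₀

lemma rhoP_pow_zero_ne_infty {q a : ℕ} (hq : 2 ≤ q) (ha : a ≠ 1) (haq : a < q) :
    (rhoP q ^ a) ((0 : ℝ) : RInf) ≠ ∞ := by
  rcases Nat.lt_or_ge a 2 with h | h
  · obtain rfl : a = 0 := by omega
    exact coe_ne_infty _
  · exact ne_of_mem_of_not_mem (rhoP_pow_zero_mem_posRay hq h haq) infty_notMem_posRay

/-- `syllables q [a₁, …, aₖ] = σ ρ^aₖ ⋯ σ ρ^a₁`: the head of the list is the rightmost syllable. -/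
noncomputable def syllables (q : ℕ) : List ℕ → Equiv.Perm RInf
  | [] => 1
  | a :: l => syllables q l * (sigmaP * rhoP q ^ a)

lemma syllables_append_singleton (q a : ℕ) (l : List ℕ) :
    syllables q (l ++ [a]) = sigmaP * rhoP q ^ a * syllables q l := by
  induction l with
  | nil => simp [syllables]
  | cons b l ih => simp only [List.cons_append, syllables, ih, mul_assoc]

lemma syllables_mapsTo_negRay {q : ℕ} (hq : 2 ≤ q) {l : List ℕ}
    (hl : ∀ a ∈ l, 0 < a ∧ a < q) : MapsTo (syllables q l) negRay negRay := by
  induction l with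
  | nil => exact mapsTo_id _
  | cons a l ih =>
    have ha := hl a List.mem_cons_self
    exact (ih fun b hb => hl b (List.mem_cons_of_mem a hb)).comp
      (sigmaP_mapsTo_posRay.comp (rhoP_pow_mapsTo_negRay hq ha.1 ha.2))

def HasReducedWord (q : ℕ) (g : Equiv.Perm RInf) : Prop :=
  ∃ c e : ℕ, ∃ l : List ℕ, c < q ∧ e < 2 ∧ (∀ a ∈ l, 0 < a ∧ a < q) ∧
    g = rhoP q ^ c * syllables q l * sigmaP ^ e

lemma HasReducedWord.rhoP_mul {q : ℕ} (hq : 2 ≤ q) {g : Equiv.Perm RInf}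
    (hg : HasReducedWord q g) : HasReducedWord q (rhoP q * g) := by
  obtain ⟨c, e, l, -, he, hl, rfl⟩ := hg
  refine ⟨(c + 1) % q, e, l, Nat.mod_lt _ (by omega), he, hl, ?_⟩
  rw [← pow_eq_pow_mod _ (rhoP_pow_self hq), pow_succ', mul_assoc, mul_assoc, mul_assoc]

lemma HasReducedWord.rhoP_pow_mul {q : ℕ} (hq : 2 ≤ q) {g : Equiv.Perm RInf}
    (hg : HasReducedWord q g) (n : ℕ) : HasReducedWord q (rhoP q ^ n * g) := by
  induction n with
  | zero => simpa using hg
  | succ n ih => simpa [pow_succ', mul_assoc] using ih.rhoP_mul hq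

lemma HasReducedWord.sigmaP_mul {q : ℕ} {g : Equiv.Perm RInf}
    (hg : HasReducedWord q g) : HasReducedWord q (sigmaP * g) := by
  obtain ⟨c, e, l, hc, he, hl, rfl⟩ := hg
  have hq : 0 < q := by omega
  rcases Nat.eq_zero_or_pos c with rfl | hc₀
  · rcases List.eq_nil_or_concat' l with rfl | ⟨l, a, rfl⟩
    · refine ⟨0, (e + 1) % 2, [], hq, Nat.mod_lt _ (by omega), by simp, ?_⟩
      rw [← pow_eq_pow_mod _ (by rw [sq]; exact sigmaP_mul_self)]
      simp [syllables, pow_succ']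
    · refine ⟨a, e, l, (hl a (by simp)).2, he, fun b hb => hl b (by simp [hb]), ?_⟩
      rw [pow_zero, one_mul, syllables_append_singleton]
      simp only [← mul_assoc, sigmaP_mul_self, one_mul]
  · refine ⟨0, e, l ++ [c], hq, he, ?_, ?_⟩
    · exact fun b hb => (List.mem_append.1 hb).elim (hl b)
        fun hb => List.mem_singleton.1 hb ▸ ⟨hc₀, hc⟩
    · rw [syllables_append_singleton]
      simp only [pow_zero, one_mul, mul_assoc]

lemma hasReducedWord_of_mem_Gq {q : ℕ} (hq : 2 ≤ q) {g : Equiv.Perm RInf} (hg : g ∈ Gq q) :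
    HasReducedWord q g := by
  induction hg using Subgroup.closure_induction_left with
  | one => exact ⟨0, 0, [], by omega, by omega, by simp, by simp [syllables]⟩
  | mul_left x hx y _ ih =>
    rcases hx with rfl | rfl
    · exact ih.sigmaP_mul
    · rw [tauP_eq, mul_assoc]
      exact ih.sigmaP_mul.rhoP_mul hq
  | inv_mul_cancel x hx y _ ih =>
    rcases hx with rfl | rfl
    · rw [inv_eq_of_mul_eq_one_right sigmaP_mul_self]
      exact ih.sigmaP_mul
    · rw [tauP_inv_eq hq, mul_assoc]
      exact (ih.rhoP_pow_mul hq _).sigmaP_mul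

lemma rhoP_pow_syllables_sigmaP_ne_infty {q c : ℕ} (hq : 2 ≤ q) (hc : c < q) {l : List ℕ}
    (hl : ∀ a ∈ l, 0 < a ∧ a < q) {v : RInf} (hv : v ∈ posRay) :
    (rhoP q ^ c) (syllables q l (sigmaP v)) ≠ ∞ := by
  have hneg := syllables_mapsTo_negRay hq hl (sigmaP_mapsTo_posRay hv)
  rcases Nat.eq_zero_or_pos c with rfl | hc₀
  · exact ne_of_mem_of_not_mem hneg infty_notMem_negRay
  · exact ne_of_mem_of_not_mem (rhoP_pow_mapsTo_negRay hq hc₀ hc hneg) infty_notMem_posRay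

lemma exists_eq_tauP_zpow_of_reduced {q c e : ℕ} (hq : 2 ≤ q) (hc : c < q) (he : e < 2)
    {l : List ℕ} (hl : ∀ a ∈ l, 0 < a ∧ a < q)
    (hfix : (rhoP q ^ c * syllables q l * sigmaP ^ e) ∞ = ∞) :
    ∃ m : ℤ, rhoP q ^ c * syllables q l * sigmaP ^ e = tauP q ^ m := by
  induction l generalizing e with
  | nil =>
    interval_cases e
    · obtain rfl : c = 0 := by
        by_contra h
        exact rhoP_pow_infty_ne_infty hq (Nat.pos_of_ne_zero h) hc
          (by simpa [syllables] using hfix)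
      exact ⟨0, by simp [syllables]⟩
    · obtain rfl : c = 1 := by
        by_contra h
        exact rhoP_pow_zero_ne_infty hq h hc (by simpa [syllables] using hfix)
      exact ⟨1, by simp [syllables, tauP_eq]⟩
  | cons a l ih =>
    obtain ⟨ha₀, haq⟩ := hl a List.mem_cons_self
    have hl' : ∀ b ∈ l, 0 < b ∧ b < q := fun b hb => hl b (List.mem_cons_of_mem a hb)
    interval_cases e
    · by_cases ha : a = q - 1
      · subst ha
        obtain ⟨m, hm⟩ := ih (e := 0) (by omega) hl'
          (by simpa [syllables, rhoP_pow_pred_infty hq] using hfix)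
        refine ⟨m - 1, ?_⟩
        rw [zpow_sub_one, ← hm, tauP_inv_eq hq]
        simp [syllables, mul_assoc]
      · exact absurd (by simpa [syllables] using hfix) (rhoP_pow_syllables_sigmaP_ne_infty hq hc
          hl' (rhoP_pow_infty_mem_posRay hq ha₀ (by omega)))
    · by_cases ha : a = 1
      · subst ha
        obtain ⟨m, hm⟩ := ih (e := 1) (by omega) hl'
          (by simpa [syllables, rhoP_zero] using hfix)
        refine ⟨m + 1, ?_⟩
        rw [zpow_add_one, ← hm, tauP_eq]
        simp [syllables, mul_assoc]
      · exact absurd (by simpa [syllables] using hfix) (rhoP_pow_syllables_sigmaP_ne_infty hq hc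
          hl' (rhoP_pow_zero_mem_posRay hq (by omega) haq))

theorem exists_eq_tauP_zpow_of_mem_Gq {q : ℕ} (hq : 2 ≤ q) {g : Equiv.Perm RInf}
    (hg : g ∈ Gq q) (hfix : g ∞ = ∞) : ∃ m : ℤ, g = tauP q ^ m := by
  obtain ⟨c, e, l, hc, he, hl, rfl⟩ := hasReducedWord_of_mem_Gq hq hg
  exact exists_eq_tauP_zpow_of_reduced hq hc he hl hfix

def homeomorphSubgroup (X : Type*) [TopologicalSpace X] : Subgroup (Equiv.Perm X) where
  carrier := {g | Continuous g ∧ Continuous ⇑g⁻¹}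
  mul_mem' hg hh := ⟨hg.1.comp hh.1, hh.2.comp hg.2⟩
  one_mem' := ⟨continuous_id, continuous_id⟩
  inv_mem' hg := ⟨hg.2, hg.1⟩

lemma tendsto_neg_inv_cocompact : Tendsto (fun x : ℝ => -x⁻¹) (cocompact ℝ) (𝓝 0) := by
  simpa using (tendsto_inv₀_cobounded (α := ℝ)).neg

lemma continuous_sigmaP : Continuous sigmaP := by
  have hne : ∀ x : ℝ, x ≠ 0 → sigmaP x = ((-x⁻¹ : ℝ) : RInf) := fun x hx => by simp [hx]
  rw [OnePoint.continuous_iff, coclosedCompact_eq_cocompact]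
  refine ⟨?_, continuous_iff_continuousAt.2 fun x => ?_⟩
  · refine ((continuous_coe.tendsto _).comp tendsto_neg_inv_cocompact).congr' ?_
    filter_upwards [(isCompact_singleton (x := (0 : ℝ))).compl_mem_cocompact] with x hx
    exact (hne x hx).symm
  · rcases eq_or_ne x 0 with rfl | hx
    · have hNE : Tendsto (fun x : ℝ => -x⁻¹) (𝓝[≠] 0) (cocompact ℝ) := by
        rw [← Metric.cobounded_eq_cocompact]
        exact tendsto_neg_cobounded.comp tendsto_inv₀_nhdsNE_zero
      have hcoe := tendsto_coe_infty (X := ℝ)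
      rw [coclosedCompact_eq_cocompact] at hcoe
      rw [ContinuousAt, ← nhdsNE_sup_pure, sigmaP_coe, if_pos rfl]
      refine Tendsto.sup ((hcoe.comp hNE).congr' ?_)
        (tendsto_pure_left.2 fun s hs => by simpa using mem_of_mem_nhds hs)
      filter_upwards [self_mem_nhdsWithin] with x hx
      exact (hne x hx).symm
    · refine (continuous_coe.continuousAt.comp
        (continuousAt_inv₀ hx).neg).congr_of_eventuallyEq ?_
      filter_upwards [isOpen_ne.mem_nhds hx] with y hy
      exact hne y hy

lemma sigmaP_mem_homeomorphSubgroup : sigmaP ∈ homeomorphSubgroup RInf := by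
  refine ⟨continuous_sigmaP, ?_⟩
  rw [inv_eq_of_mul_eq_one_right sigmaP_mul_self]
  exact continuous_sigmaP

lemma tauP_eq_onePointCongr (q : ℕ) :
    tauP q = (Homeomorph.addRight (lamq q)).onePointCongr.toEquiv := by
  ext z
  induction z using OnePoint.rec <;> rfl

lemma Gq_le_homeomorphSubgroup (q : ℕ) : Gq q ≤ homeomorphSubgroup RInf := by
  rw [Gq, Subgroup.closure_le]
  rintro g (rfl | rfl)
  · exact sigmaP_mem_homeomorphSubgroup
  · rw [tauP_eq_onePointCongr]
    exact ⟨Homeomorph.continuous _, Homeomorph.continuous_symm _⟩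

noncomputable def homeomorphOfMemGq {q : ℕ} {g : Equiv.Perm RInf} (hg : g ∈ Gq q) :
    RInf ≃ₜ RInf where
  toEquiv := g
  continuous_toFun := (Gq_le_homeomorphSubgroup q hg).1
  continuous_invFun := (Gq_le_homeomorphSubgroup q hg).2

lemma SepSide.image (φ : RInf ≃ₜ RInf) {u v x y : RInf} (h : SepSide u v x y) :
    SepSide (φ u) (φ v) (φ x) (φ y) := by
  obtain ⟨hy, hx⟩ := h
  have hset : ({φ u, φ v}ᶜ : Set RInf) = φ '' {u, v}ᶜ := by
    rw [image_compl_eq φ.bijective, image_pair]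
  refine ⟨hset ▸ mem_image_of_mem φ hy, ?_⟩
  rwa [hset, ← φ.image_connectedComponentIn hy, φ.injective.mem_set_image]

lemma isPreconnected_insert_infty_image {X : Type*} [TopologicalSpace X] {s : Set X}
    (hs : IsPreconnected s) {l : Filter X} [l.NeBot] (hl : l ≤ coclosedCompact X)
    (hsl : s ∈ l) : IsPreconnected (insert ∞ ((↑) '' s : Set (OnePoint X))) :=
  (hs.image _ continuous_coe.continuousOn).subset_closure (subset_insert _ _)
    (insert_subset (mem_closure_of_tendsto (tendsto_coe_infty.mono_left hl)
      (eventually_of_mem hsl fun _ hx => mem_image_of_mem _ hx)) subset_closure)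

lemma connectedComponentIn_compl_pair_subset_Ioo {b c t : ℝ} (ht : t ∈ Ioo b c) :
    connectedComponentIn {(b : RInf), (c : RInf)}ᶜ (t : RInf) ⊆ (↑) '' Ioo b c := by
  have hsplit : ({(b : RInf), (c : RInf)}ᶜ : Set RInf) ⊆
      (↑) '' Ioo b c ∪ ((↑) '' Icc b c)ᶜ := by
    intro z hz
    by_cases hz' : z ∈ ((↑) '' Icc b c : Set RInf)
    · obtain ⟨r, hr, rfl⟩ := hz'
      refine Or.inl (mem_image_of_mem _ ⟨hr.1.lt_of_ne ?_, hr.2.lt_of_ne ?_⟩) <;>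
        rintro rfl <;> simp at hz
    · exact Or.inr hz'
  exact isPreconnected_connectedComponentIn.subset_left_of_subset_union
    (isOpen_image_coe.2 isOpen_Ioo)
    (isClosed_image_coe.2 ⟨isClosed_Icc, isCompact_Icc⟩).isOpen_compl
    (disjoint_compl_right.mono_left (image_mono Ioo_subset_Icc_self))
    ((connectedComponentIn_subset _ _).trans hsplit)
    ⟨_, mem_connectedComponentIn (by simp [ht.1.ne', ht.2.ne]), mem_image_of_mem _ ht⟩

lemma infty_mem_connectedComponentIn_compl_pair {b c t : ℝ} (hbc : b < c) (htb : t ≠ b)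
    (htc : t ≠ c) (ht : t ∉ Ioo b c) :
    ∞ ∈ connectedComponentIn {(b : RInf), (c : RInf)}ᶜ (t : RInf) := by
  obtain ⟨s, l, _, hl, hsl, hs, hts, hbs, hcs⟩ : ∃ (s : Set ℝ) (l : Filter ℝ), l.NeBot ∧
      l ≤ cocompact ℝ ∧ s ∈ l ∧ IsPreconnected s ∧ t ∈ s ∧ b ∉ s ∧ c ∉ s := by
    rcases lt_or_gt_of_ne htb with htb' | htb'
    · exact ⟨Iio b, atBot, inferInstance, atBot_le_cocompact, Iio_mem_atBot b,
        isPreconnected_Iio, htb', lt_irrefl b, hbc.not_gt⟩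
    · have htc' : c < t := lt_of_le_of_ne (not_lt.1 fun h => ht ⟨htb', h⟩) htc.symm
      exact ⟨Ioi c, atTop, inferInstance, atTop_le_cocompact, Ioi_mem_atTop c,
        isPreconnected_Ioi, htc', hbc.not_gt, lt_irrefl c⟩
  refine (isPreconnected_insert_infty_image hs (coclosedCompact_eq_cocompact (X := ℝ) ▸ hl)
    hsl).subset_connectedComponentIn (mem_insert_of_mem _ (mem_image_of_mem _ hts)) ?_
    (mem_insert _ _)
  rintro _ (rfl | ⟨r, hr, rfl⟩)
  · simp
  · simp only [mem_compl_iff, mem_insert_iff, mem_singleton_iff, coe_eq_coe, not_or]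
    exact ⟨fun h => hbs (h ▸ hr), fun h => hcs (h ▸ hr)⟩

lemma sepSide_infty_iff {b c : ℝ} (hbc : b < c) {y : RInf} :
    SepSide b c ∞ y ↔ y ∈ ((↑) '' Ioo b c : Set RInf) := by
  constructor
  · rintro ⟨hy, hinf⟩
    by_contra hyI
    induction y using OnePoint.rec with
    | infty => exact hinf (mem_connectedComponentIn hy)
    | coe t =>
      exact hinf (infty_mem_connectedComponentIn_compl_pair hbc (fun h => hy (by simp [h]))
        (fun h => hy (by simp [h])) fun ht => hyI (mem_image_of_mem _ ht))
  · rintro ⟨t, ht, rfl⟩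
    exact ⟨by simp [ht.1.ne', ht.2.ne],
      fun hinf => infty_notMem_image_coe (connectedComponentIn_compl_pair_subset_Ioo ht hinf)⟩

lemma FareyAdj.image {q : ℕ} {h : Equiv.Perm RInf} (hh : h ∈ Gq q) {u v : RInf}
    (huv : FareyAdj q u v) : FareyAdj q (h u) (h v) := by
  obtain ⟨hne, g, hg, hgu⟩ := huv
  exact ⟨h.injective.ne hne, h * g, mul_mem hh hg, by simpa using hgu⟩

lemma fareyAdj_infty_intCast_mul_lamq (q : ℕ) (n : ℤ) : FareyAdj q ∞ ((n * lamq q : ℝ) : RInf) := by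
  refine ⟨infty_ne_coe _, tauP q ^ n * sigmaP,
    mul_mem (zpow_mem (tauP_mem_Gq q) n) (sigmaP_mem_Gq q),
    Or.inl ⟨?_, ?_⟩⟩ <;> simp [tauP_zpow_coe, tauP_zpow_infty]

lemma V0_eq_range {q : ℕ} (hq : 2 ≤ q) : V0 q = range fun i : ℤ => (rhoP q ^ i) ∞ := by
  ext z
  constructor
  · rintro ⟨i, -, rfl⟩
    exact ⟨i, by simp⟩
  · rintro ⟨i, rfl⟩
    have hi₀ := Int.emod_nonneg i (by omega : (q : ℤ) ≠ 0)
    have hiq := Int.emod_lt_of_pos i (by omega : (0 : ℤ) < q)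
    refine ⟨(i % q).toNat, by omega, ?_⟩
    rw [← zpow_natCast, Int.toNat_of_nonneg hi₀, ← zpow_eq_zpow_emod' i (rhoP_pow_self hq)]

lemma rhoP_zpow_image_V0 {q : ℕ} (hq : 2 ≤ q) (k : ℤ) : ⇑(rhoP q ^ k) '' V0 q = V0 q := by
  rw [V0_eq_range hq, ← range_comp]
  convert (Equiv.addLeft k).surjective.range_comp (fun i : ℤ => (rhoP q ^ i) ∞) using 2
  ext i
  simp [zpow_add]

def IsSeparatingFace (q : ℕ) (x y : RInf) (P : Set RInf) : Prop :=
  ∃ g ∈ Gq q, ∃ i : ℤ, P = ⇑g '' V0 q ∧ g ((rhoP q ^ i) ∞) = x ∧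
    SepSide (g ((rhoP q ^ (i - 1)) ∞)) (g ((rhoP q ^ (i + 1)) ∞)) x y

lemma IsSeparatingFace.image {q : ℕ} {h : Equiv.Perm RInf} (hh : h ∈ Gq q) {x y : RInf}
    {P : Set RInf} (hP : IsSeparatingFace q x y P) : IsSeparatingFace q (h x) (h y) (h '' P) := by
  obtain ⟨g, hg, i, rfl, rfl, hsep⟩ := hP
  exact ⟨h * g, mul_mem hh hg, i, by rw [Equiv.Perm.coe_mul, image_comp], rfl,
    SepSide.image (homeomorphOfMemGq hh) hsep⟩

lemma isSeparatingFace_image_iff {q : ℕ} {h : Equiv.Perm RInf} (hh : h ∈ Gq q) {x y : RInf}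
    {P : Set RInf} : IsSeparatingFace q (h x) (h y) (h '' P) ↔ IsSeparatingFace q x y P :=
  ⟨fun hP => by simpa using hP.image (inv_mem hh), fun hP => hP.image hh⟩

lemma isSeparatingFace_infty_iff {q : ℕ} (hq : 3 ≤ q) {y : RInf} {P : Set RInf} :
    IsSeparatingFace q ∞ y P ↔ ∃ m : ℤ, P = ⇑(tauP q ^ m) '' V0 q ∧
      y ∈ ((↑) '' Ioo (m * lamq q) ((m + 1) * lamq q) : Set RInf) := by
  have hq2 : 2 ≤ q := by omega
  have hsep (m : ℤ) : SepSide ((tauP q ^ m) ((rhoP q ^ (-1 : ℤ)) ∞))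
      ((tauP q ^ m) ((rhoP q ^ (1 : ℤ)) ∞)) ∞ y ↔
      y ∈ ((↑) '' Ioo (m * lamq q) ((m + 1) * lamq q) : Set RInf) := by
    rw [zpow_neg_one, zpow_one, (Equiv.Perm.inv_eq_iff_eq).2 (rhoP_zero q).symm, rhoP_infty,
      tauP_zpow_coe, tauP_zpow_coe, zero_add, show lamq q + m * lamq q = (m + 1) * lamq q by ring]
    exact sepSide_infty_iff (by nlinarith [lamq_pos hq])
  constructor
  · rintro ⟨g, hg, i, rfl, hfix, hgsep⟩
    obtain ⟨m, hm⟩ := exists_eq_tauP_zpow_of_mem_Gq hq2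
      (mul_mem hg (zpow_mem (rhoP_mem_Gq q) i)) hfix
    obtain rfl := eq_mul_inv_of_mul_eq hm
    have hnbr (j : ℤ) : (tauP q ^ m * (rhoP q ^ i)⁻¹) ((rhoP q ^ j) ∞) =
        (tauP q ^ m) ((rhoP q ^ (j - i)) ∞) := by
      rw [Equiv.Perm.mul_apply, ← zpow_neg, ← Equiv.Perm.mul_apply (rhoP q ^ (-i)), ← zpow_add,
        neg_add_eq_sub]
    refine ⟨m, ?_, ?_⟩
    · rw [Equiv.Perm.coe_mul, image_comp, ← zpow_neg, rhoP_zpow_image_V0 hq2]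
    · rw [hnbr, hnbr, sub_sub_cancel_left, add_sub_cancel_left] at hgsep
      exact (hsep m).1 hgsep
  · rintro ⟨m, rfl, hy⟩
    exact ⟨tauP q ^ m, zpow_mem (tauP_mem_Gq q) m, 0, rfl,
      by simpa using tauP_zpow_infty q m, by simpa using (hsep m).2 hy⟩

lemma floor_div_eq_of_mem_Ioo {a t : ℝ} (ha : 0 < a) {m : ℤ}
    (h : t ∈ Ioo (m * a) ((m + 1) * a)) : ⌊t / a⌋ = m := by
  rw [Int.floor_eq_iff, le_div_iff₀ ha, div_lt_iff₀ ha]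
  exact ⟨h.1.le, h.2⟩

lemma mem_Ioo_floor_div {a t : ℝ} (ha : 0 < a) (ht : ∀ n : ℤ, t ≠ n * a) :
    t ∈ Ioo (⌊t / a⌋ * a) ((⌊t / a⌋ + 1) * a) :=
  ⟨((le_div_iff₀ ha).1 (Int.floor_le _)).lt_of_ne (ht _).symm,
    (div_lt_iff₀ ha).1 (Int.lt_floor_add_one _)⟩

lemma existsUnique_isSeparatingFace_infty {q : ℕ} (hq : 3 ≤ q) {t : ℝ}
    (ht : ∀ n : ℤ, t ≠ n * lamq q) : ∃! P, IsSeparatingFace q ∞ t P := by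
  simp_rw [isSeparatingFace_infty_iff hq, mem_image, coe_eq_coe, exists_eq_right]
  refine ⟨_, ⟨_, rfl, mem_Ioo_floor_div (lamq_pos hq) ht⟩, ?_⟩
  rintro _ ⟨m, rfl, hm⟩
  rw [floor_div_eq_of_mem_Ioo (lamq_pos hq) hm]

theorem stmt7_general (q : ℕ) (hq : 3 ≤ q) (x y : RInf)
    (hx : FareyVertex q x) (hxy : x ≠ y)
    (hnadj : ¬ FareyAdj q x y) :
    ∃! P : Set RInf, ∃ g ∈ Gq q, ∃ i : ℤ,
      P = ⇑g '' V0 q ∧ g ((rhoP q ^ i) ∞) = x ∧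
      SepSide (g ((rhoP q ^ (i - 1)) ∞)) (g ((rhoP q ^ (i + 1)) ∞)) x y := by
  obtain ⟨h, hh, rfl⟩ := hx
  obtain ⟨t, ht⟩ : ∃ t : ℝ, (t : RInf) = h⁻¹ y :=
    ne_infty_iff_exists.1 fun hy => hxy (by simp [← hy])
  have hnot (n : ℤ) : t ≠ n * lamq q := by
    rintro rfl
    exact hnadj (by simpa [ht] using (fareyAdj_infty_intCast_mul_lamq q n).image hh)
  show ∃! P, IsSeparatingFace q (h ∞) y P
  refine ((Equiv.Set.congr h).existsUnique_congr fun P => ?_).1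
    (existsUnique_isSeparatingFace_infty hq hnot)
  rw [Equiv.Set.congr_apply, ← isSeparatingFace_image_iff hh, ht]
  simp

/-- there is a unique face `P` of `𝓕_q` incident to `x` such that `y`
lies in the component of the complement of the two neighbours of `x` on `P` not
containing `x`. -/
theorem stmt7 (q : ℕ) (hq : 3 ≤ q) (x y : RInf)
    (hx : FareyVertex q x) (hy : FareyVertex q y) (hxy : x ≠ y)
    (hnadj : ¬ FareyAdj q x y) :
    ∃! P : Set RInf, ∃ g ∈ Gq q, ∃ i : ℤ,
      P = ⇑g '' V0 q ∧ g ((rhoP q ^ i) ∞) = x ∧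
      SepSide (g ((rhoP q ^ (i - 1)) ∞)) (g ((rhoP q ^ (i + 1)) ∞)) x y :=
  stmt7_general q hq x y hx hxy hnadj
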